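/- arXiv:2001.11828 — 3 statements merged into one kernel-verified Lean document; each statement's English description precedes it below -/
import Mathlib

section
/- For every norm ⦀·⦀ on ℝ^d, every k ∈ {1,…,d} and every y ∈ ℝ^d, the dual coordinate-k norm satisfies ⦀y⦀_{k,★} = sup_{K ⊆ {1,…,d}, |K| ≤ k} σ_{R_K ∩ S}(y) = σ_{{x : ℓ0(x) ≤ k} ∩ S}(y) = σ_{{x : ℓ0(x) = k} ∩ S}(y), where σ_C(y) = sup_{x ∈ C} ⟨x,y⟩ is the support function. -/
open scoped BigOperators

noncomputable section

/-- The Euclidean pairing `⟨x,y⟩ = ∑ i, x i * y i` on `Fin d → ℝ`. -/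
def dotp {d : ℕ} (x y : Fin d → ℝ) : ℝ := ∑ i, x i * y i

/-- The coordinate subspace `R_K` of vectors vanishing outside `K`. -/
def RK {d : ℕ} (K : Finset (Fin d)) : Set (Fin d → ℝ) := {x | ∀ j ∉ K, x j = 0}

/-- Orthogonal projection onto `R_K`. -/
def projK {d : ℕ} (K : Finset (Fin d)) (x : Fin d → ℝ) : Fin d → ℝ :=
  fun i => if i ∈ K then x i else 0

/-- The ℓ0 pseudonorm: number of nonzero components. -/
def ell0 {d : ℕ} (x : Fin d → ℝ) : ℕ := (Function.support x).ncard

/-- `N` is a norm on `ℝ^d`. -/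
structure IsNorm {d : ℕ} (N : (Fin d → ℝ) → ℝ) : Prop where
  eq_zero_iff : ∀ x, N x = 0 ↔ x = 0
  smul : ∀ (c : ℝ) (x : Fin d → ℝ), N (c • x) = |c| * N x
  triangle : ∀ x y, N (x + y) ≤ N x + N y

/-- `⦀y⦀_{K,★}`: the dual norm (w.r.t. the Euclidean pairing), on the subspace `R_K`,
of the restriction of `N` to `R_K`. -/
def restStar {d : ℕ} (N : (Fin d → ℝ) → ℝ) (K : Finset (Fin d)) (y : Fin d → ℝ) : ℝ :=
  sSup {r | ∃ x ∈ RK K, N x ≤ 1 ∧ r = dotp x y}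

/-- The dual coordinate-k norm `⦀y⦀_{k,★} = sup_{|K| ≤ k} ⦀y_K⦀_{K,★}`. -/
def dualCoord {d : ℕ} (N : (Fin d → ℝ) → ℝ) (k : ℕ) (y : Fin d → ℝ) : ℝ :=
  sSup {r | ∃ K : Finset (Fin d), K.card ≤ k ∧ r = restStar N K (projK K y)}

/-- The coordinate-k norm: the dual norm of the dual coordinate-k norm. -/
def coordNorm {d : ℕ} (N : (Fin d → ℝ) → ℝ) (k : ℕ) (x : Fin d → ℝ) : ℝ :=
  sSup {r | ∃ y : Fin d → ℝ, dualCoord N k y ≤ 1 ∧ r = dotp x y}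

/-- The support function `σ_C(y) = sup_{x ∈ C} ⟨x,y⟩`, with values in `ℝ̄`. -/
def suppFn {d : ℕ} (C : Set (Fin d → ℝ)) (y : Fin d → ℝ) : EReal :=
  ⨆ x ∈ C, ((dotp x y : ℝ) : EReal)


namespace Aux
variable {d : ℕ} {N : (Fin d → ℝ) → ℝ}

lemma N_zero (hN : IsNorm N) : N 0 = 0 := (hN.eq_zero_iff 0).mpr rfl

lemma N_neg (hN : IsNorm N) (x : Fin d → ℝ) : N (-x) = N x := by
  have h := hN.smul (-1) x; simpa using h

lemma N_nonneg (hN : IsNorm N) (x : Fin d → ℝ) : 0 ≤ N x := by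
  have h := hN.triangle x (-x)
  rw [add_neg_cancel, N_zero hN, N_neg hN] at h
  linarith

lemma N_pos (hN : IsNorm N) {x : Fin d → ℝ} (hx : x ≠ 0) : 0 < N x := by
  rcases lt_or_eq_of_le (N_nonneg hN x) with h | h
  · exact h
  · exact absurd ((hN.eq_zero_iff x).mp h.symm) hx

lemma N_sum_le (hN : IsNorm N) {ι : Type*} (s : Finset ι) (f : ι → Fin d → ℝ) :
    N (∑ i ∈ s, f i) ≤ ∑ i ∈ s, N (f i) := by
  induction s using Finset.cons_induction with
  | empty => simp [N_zero hN]
  | cons a s ha ih =>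
    rw [Finset.sum_cons, Finset.sum_cons]
    exact (hN.triangle _ _).trans (by linarith)

lemma N_le_norm (hN : IsNorm N) :
    ∃ C : ℝ, 0 ≤ C ∧ ∀ x, N x ≤ C * ‖x‖ := by
  classical
  refine ⟨∑ i, N ((fun j => if i = j then 1 else 0 : Fin d → ℝ)),
    Finset.sum_nonneg fun i _ => N_nonneg hN _, fun x => ?_⟩
  have hx := pi_eq_sum_univ x
  calc N x = N (∑ i, x i • ((fun j => if i = j then 1 else 0 : Fin d → ℝ))) := by rw [← hx]
    _ ≤ ∑ i, N (x i • ((fun j => if i = j then 1 else 0 : Fin d → ℝ))) := N_sum_le hN _ _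
    _ ≤ ∑ i, ‖x‖ * N ((fun j => if i = j then 1 else 0 : Fin d → ℝ)) := by
        refine Finset.sum_le_sum fun i _ => ?_
        rw [hN.smul]
        have h : |x i| ≤ ‖x‖ := by
          simpa [Real.norm_eq_abs] using norm_le_pi_norm x i
        exact mul_le_mul_of_nonneg_right h (N_nonneg hN _)
    _ = (∑ i, N ((fun j => if i = j then 1 else 0 : Fin d → ℝ))) * ‖x‖ := by
        rw [Finset.sum_mul]; exact Finset.sum_congr rfl fun i _ => mul_comm _ _

lemma N_continuous (hN : IsNorm N) : Continuous N := by
  obtain ⟨C, hC0, hC⟩ := N_le_norm hN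
  have : LipschitzWith C.toNNReal N := by
    refine LipschitzWith.of_dist_le_mul fun a b => ?_
    rw [Real.dist_eq, dist_eq_norm]
    have h1 : N a ≤ N (a - b) + N b := by
      have := hN.triangle (a - b) b; simpa using this
    have h2 : N b ≤ N (a - b) + N a := by
      have h := hN.triangle (b - a) a
      rw [(by abel : b - a = -(a-b)), N_neg hN] at h
      simpa using h
    have h3 : N (a - b) ≤ C * ‖a - b‖ := hC _
    rw [Real.coe_toNNReal C hC0, abs_le]
    constructor <;> linarith
  exact this.continuous

lemma norm_le_N (hN : IsNorm N) : ∃ m : ℝ, 0 < m ∧ ∀ x, m * ‖x‖ ≤ N x := by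
  by_cases hS : (Metric.sphere (0 : Fin d → ℝ) 1).Nonempty
  · obtain ⟨x0, hx0, hmin⟩ := (isCompact_sphere (0 : Fin d → ℝ) 1).exists_isMinOn hS
      (N_continuous hN).continuousOn
    have hx0n : ‖x0‖ = 1 := by simpa using hx0
    have hx0ne : x0 ≠ 0 := by intro h; rw [h] at hx0n; simp at hx0n
    refine ⟨N x0, N_pos hN hx0ne, fun x => ?_⟩
    by_cases hx : x = 0
    · simp [hx, N_zero hN, N_nonneg]
    · have hnx : (0:ℝ) < ‖x‖ := norm_pos_iff.mpr hx
      have hmem : ‖x‖⁻¹ • x ∈ Metric.sphere (0 : Fin d → ℝ) 1 := by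
        simp [norm_smul, abs_of_pos (inv_pos.mpr hnx), inv_mul_cancel₀ hnx.ne']
      have := hmin hmem
      have h2 : N x0 ≤ N (‖x‖⁻¹ • x) := this
      rw [hN.smul, abs_of_pos (inv_pos.mpr hnx)] at h2
      have := mul_le_mul_of_nonneg_right h2 hnx.le
      rw [inv_mul_eq_div] at this
      calc N x0 * ‖x‖ ≤ N x / ‖x‖ * ‖x‖ := this
        _ = N x := by field_simp
  · refine ⟨1, one_pos, fun x => ?_⟩
    by_cases hx : x = 0
    · simp [hx, N_zero hN]
    · exact absurd ⟨‖x‖⁻¹ • x, by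
        simp [norm_smul, abs_of_pos (inv_pos.mpr (norm_pos_iff.mpr hx)),
          inv_mul_cancel₀ (norm_pos_iff.mpr hx).ne']⟩ hS

end Aux

namespace Aux2
open Aux
variable {d : ℕ}

lemma dotp_zero (y : Fin d → ℝ) : dotp (0 : Fin d → ℝ) y = 0 := by simp [dotp]

lemma dotp_smul (c : ℝ) (x y : Fin d → ℝ) : dotp (c • x) y = c * dotp x y := by
  simp [dotp, Finset.mul_sum, mul_assoc]

lemma dotp_neg (x y : Fin d → ℝ) : dotp (-x) y = - dotp x y := by
  have := dotp_smul (-1) x y; simpa using this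

lemma dotp_add (x x' y : Fin d → ℝ) : dotp (x + x') y = dotp x y + dotp x' y := by
  simp [dotp, add_mul, Finset.sum_add_distrib]

lemma dotp_le (x y : Fin d → ℝ) : dotp x y ≤ ‖x‖ * ∑ i, |y i| := by
  calc dotp x y ≤ ∑ i, |x i * y i| := Finset.sum_le_sum fun i _ => le_abs_self _
    _ ≤ ∑ i, ‖x‖ * |y i| := by
        refine Finset.sum_le_sum fun i _ => ?_
        rw [abs_mul]
        exact mul_le_mul_of_nonneg_right
          (by simpa [Real.norm_eq_abs] using norm_le_pi_norm x i) (abs_nonneg _)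
    _ = ‖x‖ * ∑ i, |y i| := by rw [Finset.mul_sum]

lemma RK_zero (K : Finset (Fin d)) : (0 : Fin d → ℝ) ∈ RK K := fun _ _ => rfl

lemma RK_smul {K : Finset (Fin d)} {x : Fin d → ℝ} (hx : x ∈ RK K) (c : ℝ) :
    c • x ∈ RK K := fun j hj => by simp [hx j hj]

lemma dotp_projK {K : Finset (Fin d)} {x : Fin d → ℝ} (hx : x ∈ RK K) (y : Fin d → ℝ) :
    dotp x (projK K y) = dotp x y := by
  unfold dotp projK
  refine Finset.sum_congr rfl fun i _ => ?_
  by_cases hi : i ∈ K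
  · simp [hi]
  · simp [hi, hx i hi]

lemma mem_RK_iff_support {K : Finset (Fin d)} {x : Fin d → ℝ} :
    x ∈ RK K ↔ Function.support x ⊆ ↑K := by
  constructor
  · intro h i hi
    by_contra hK
    exact hi (h i (by simpa using hK))
  · intro h j hj
    by_contra hx
    exact hj (by exact_mod_cast h hx)

lemma coe_sSup_eq (S : Set ℝ) (hne : S.Nonempty) (hbdd : BddAbove S) :
    ((sSup S : ℝ) : EReal) = ⨆ r ∈ S, ((r : ℝ) : EReal) := by
  have hmono : Monotone (Real.toEReal) := fun a b h => EReal.coe_le_coe_iff.mpr h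
  rw [hmono.map_csSup_of_continuousAt (continuous_coe_real_ereal.continuousAt) hne hbdd,
    sSup_image]

lemma suppFn_eq_biSup (C : Set (Fin d → ℝ)) (y : Fin d → ℝ) :
    suppFn C y = ⨆ r ∈ {r : ℝ | ∃ x ∈ C, r = dotp x y}, ((r : ℝ) : EReal) := by
  apply le_antisymm
  · exact iSup₂_le fun x hx => le_iSup₂_of_le (dotp x y) ⟨x, hx, rfl⟩ le_rfl
  · refine iSup₂_le fun r hr => ?_
    obtain ⟨x, hx, rfl⟩ := hr
    exact le_iSup₂_of_le x hx le_rfl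

lemma suppFn_eq_coe_sSup (C : Set (Fin d → ℝ)) (y : Fin d → ℝ)
    (hne : {r : ℝ | ∃ x ∈ C, r = dotp x y}.Nonempty)
    (hbdd : BddAbove {r : ℝ | ∃ x ∈ C, r = dotp x y}) :
    suppFn C y = ((sSup {r : ℝ | ∃ x ∈ C, r = dotp x y} : ℝ) : EReal) := by
  rw [suppFn_eq_biSup, coe_sSup_eq _ hne hbdd]

lemma suppFn_mono {C C' : Set (Fin d → ℝ)} (h : C ⊆ C') (y : Fin d → ℝ) :
    suppFn C y ≤ suppFn C' y :=
  iSup₂_le fun x hx => le_iSup₂_of_le x (h hx) le_rfl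

end Aux2


namespace Main
open Aux Aux2

variable {d : ℕ} {N : (Fin d → ℝ) → ℝ}

/-- The "ball" dual set. -/
def B (N : (Fin d → ℝ) → ℝ) (y : Fin d → ℝ) (K : Finset (Fin d)) : Set ℝ :=
  {r | ∃ x ∈ RK K, N x ≤ 1 ∧ r = dotp x y}

/-- The "sphere" dual set, in the shape used by `suppFn_eq_coe_sSup`. -/
def Sph (N : (Fin d → ℝ) → ℝ) (y : Fin d → ℝ) (K : Finset (Fin d)) : Set ℝ :=
  {r | ∃ x ∈ RK K ∩ {x | N x = 1}, r = dotp x y}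

lemma zero_mem_B (hN : IsNorm N) (y : Fin d → ℝ) (K : Finset (Fin d)) :
    (0 : ℝ) ∈ B N y K :=
  ⟨0, RK_zero K, by rw [N_zero hN]; norm_num, (dotp_zero y).symm⟩

lemma exists_bound (hN : IsNorm N) (y : Fin d → ℝ) :
    ∃ M : ℝ, ∀ x : Fin d → ℝ, N x ≤ 1 → dotp x y ≤ M := by
  obtain ⟨m, hm, hmN⟩ := norm_le_N hN
  refine ⟨m⁻¹ * ∑ i, |y i|, fun x hx => ?_⟩
  have h1 : ‖x‖ ≤ m⁻¹ := by
    have h := hmN x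
    nlinarith [inv_pos.mpr hm, mul_le_mul_of_nonneg_left (h.trans hx) (inv_pos.mpr hm).le,
      inv_mul_cancel₀ hm.ne']
  calc dotp x y ≤ ‖x‖ * ∑ i, |y i| := dotp_le x y
    _ ≤ m⁻¹ * ∑ i, |y i| :=
      mul_le_mul_of_nonneg_right h1 (Finset.sum_nonneg fun i _ => abs_nonneg _)

lemma bddAbove_B (hN : IsNorm N) (y : Fin d → ℝ) (K : Finset (Fin d)) :
    BddAbove (B N y K) := by
  obtain ⟨M, hM⟩ := exists_bound hN y
  exact ⟨M, fun r ⟨x, _, hx1, hr⟩ => hr ▸ hM x hx1⟩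

lemma bddAbove_Sph (hN : IsNorm N) (y : Fin d → ℝ) (K : Finset (Fin d)) :
    BddAbove (Sph N y K) := by
  obtain ⟨M, hM⟩ := exists_bound hN y
  exact ⟨M, fun r ⟨x, ⟨_, hx1⟩, hr⟩ => hr ▸ hM x hx1.le⟩

lemma Sph_subset_B (K : Finset (Fin d)) (y : Fin d → ℝ) : Sph N y K ⊆ B N y K :=
  fun r ⟨x, ⟨hx, hx1⟩, hr⟩ => ⟨x, hx, hx1.le, hr⟩

lemma sSup_B_nonneg (hN : IsNorm N) (y : Fin d → ℝ) (K : Finset (Fin d)) :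
    0 ≤ sSup (B N y K) :=
  le_csSup (bddAbove_B hN y K) (zero_mem_B hN y K)

/-- For a nonempty `K`, a point of `RK K` on the unit sphere of `N`. -/
lemma exists_sphere_pt (hN : IsNorm N) {K : Finset (Fin d)} (hK : K.Nonempty) :
    ∃ x : Fin d → ℝ, x ∈ RK K ∧ N x = 1 := by
  obtain ⟨i, hi⟩ := hK
  set e : Fin d → ℝ := fun j => if j = i then 1 else 0 with he
  have heK : e ∈ RK K := by
    intro j hj
    have : j ≠ i := fun h => hj (h ▸ hi)
    simp [he, this]
  have hene : e ≠ 0 := by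
    intro h
    have := congrFun h i
    simp [he] at this
  have hpos := N_pos hN hene
  refine ⟨(N e)⁻¹ • e, RK_smul heK _, ?_⟩
  rw [hN.smul, abs_of_pos (inv_pos.mpr hpos), inv_mul_cancel₀ hpos.ne']

lemma sSup_Sph_nonneg (hN : IsNorm N) (y : Fin d → ℝ) {K : Finset (Fin d)}
    (hK : K.Nonempty) : 0 ≤ sSup (Sph N y K) := by
  obtain ⟨x, hx, hx1⟩ := exists_sphere_pt hN hK
  have h1 : dotp x y ∈ Sph N y K := ⟨x, ⟨hx, hx1⟩, rfl⟩
  have h2 : dotp (-x) y ∈ Sph N y K := by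
    refine ⟨-x, ⟨by simpa using RK_smul hx (-1), ?_⟩, rfl⟩
    rw [← hx1]; exact N_neg hN x
  rcases le_or_gt 0 (dotp x y) with h | h
  · exact h.trans (le_csSup (bddAbove_Sph hN y K) h1)
  · have : 0 ≤ dotp (-x) y := by rw [dotp_neg]; linarith
    exact this.trans (le_csSup (bddAbove_Sph hN y K) h2)

lemma sSup_B_eq_sSup_Sph (hN : IsNorm N) (y : Fin d → ℝ) {K : Finset (Fin d)}
    (hK : K.Nonempty) : sSup (B N y K) = sSup (Sph N y K) := by
  apply le_antisymm
  · refine csSup_le ⟨0, zero_mem_B hN y K⟩ fun r ⟨x, hx, hx1, hr⟩ => ?_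
    subst hr
    rcases le_or_gt (dotp x y) 0 with h | h
    · exact h.trans (sSup_Sph_nonneg hN y hK)
    · have hxne : x ≠ 0 := by
        intro h0; rw [h0, dotp_zero] at h; exact lt_irrefl _ h
      have hpos := N_pos hN hxne
      have hmem : dotp ((N x)⁻¹ • x) y ∈ Sph N y K := by
        refine ⟨(N x)⁻¹ • x, ⟨RK_smul hx _, ?_⟩, rfl⟩
        show N ((N x)⁻¹ • x) = 1
        rw [hN.smul, abs_of_pos (inv_pos.mpr hpos), inv_mul_cancel₀ hpos.ne']
      have hle : dotp x y ≤ dotp ((N x)⁻¹ • x) y := by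
        rw [dotp_smul]
        rw [le_inv_mul_iff₀ hpos]
        nlinarith
      exact hle.trans (le_csSup (bddAbove_Sph hN y K) hmem)
  · obtain ⟨x0, hx0, hx01⟩ := exists_sphere_pt hN hK
    exact csSup_le_csSup (bddAbove_B hN y K) ⟨dotp x0 y, x0, ⟨hx0, hx01⟩, rfl⟩
      (Sph_subset_B K y)

lemma restStar_projK (N : (Fin d → ℝ) → ℝ) (y : Fin d → ℝ) (K : Finset (Fin d)) :
    restStar N K (projK K y) = sSup (B N y K) := by
  unfold restStar B
  congr 1
  ext r
  constructor
  · rintro ⟨x, hx, hx1, rfl⟩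
    exact ⟨x, hx, hx1, (dotp_projK hx y)⟩
  · rintro ⟨x, hx, hx1, rfl⟩
    exact ⟨x, hx, hx1, (dotp_projK hx y).symm⟩


/-- The set whose sup is `dualCoord`. -/
def D (N : (Fin d → ℝ) → ℝ) (y : Fin d → ℝ) (k : ℕ) : Set ℝ :=
  {r | ∃ K : Finset (Fin d), K.card ≤ k ∧ r = sSup (B N y K)}

lemma dualCoord_eq_sSup_D (N : (Fin d → ℝ) → ℝ) (y : Fin d → ℝ) (k : ℕ) :
    dualCoord N k y = sSup (D N y k) := by
  unfold dualCoord D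
  congr 1
  ext r
  simp only [Set.mem_setOf_eq, restStar_projK]

lemma D_finite (N : (Fin d → ℝ) → ℝ) (y : Fin d → ℝ) (k : ℕ) : (D N y k).Finite := by
  have : D N y k ⊆ (fun K : Finset (Fin d) => sSup (B N y K)) '' Set.univ := by
    rintro r ⟨K, _, rfl⟩
    exact ⟨K, Set.mem_univ _, rfl⟩
  exact ((Set.finite_univ).image _).subset this

lemma D_nonempty (N : (Fin d → ℝ) → ℝ) (y : Fin d → ℝ) (k : ℕ) : (D N y k).Nonempty :=
  ⟨sSup (B N y ∅), ∅, by simp, rfl⟩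

lemma dualCoord_attained (N : (Fin d → ℝ) → ℝ) (y : Fin d → ℝ) (k : ℕ) :
    ∃ K : Finset (Fin d), K.card ≤ k ∧ dualCoord N k y = sSup (B N y K) := by
  have h := (D_nonempty N y k).csSup_mem (D_finite N y k)
  rw [dualCoord_eq_sSup_D]
  exact h

lemma le_dualCoord (N : (Fin d → ℝ) → ℝ) (y : Fin d → ℝ) {k : ℕ} {K : Finset (Fin d)}
    (hK : K.card ≤ k) : sSup (B N y K) ≤ dualCoord N k y := by
  rw [dualCoord_eq_sSup_D]
  exact le_csSup ((D_finite N y k).bddAbove) ⟨K, hK, rfl⟩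

lemma B_empty (hN : IsNorm N) (y : Fin d → ℝ) : B N y (∅ : Finset (Fin d)) = {0} := by
  ext r
  constructor
  · rintro ⟨x, hx, _, rfl⟩
    have : x = 0 := funext fun j => hx j (by simp)
    simp [this, dotp_zero]
  · rintro rfl
    exact zero_mem_B hN y ∅

/-- The suppFn over `RK K ∩ sphere` is at most `sSup (B K)`. -/
lemma suppFn_le_coe_sSup_B (hN : IsNorm N) (y : Fin d → ℝ) (K : Finset (Fin d)) :
    suppFn (RK K ∩ {x | N x = 1}) y ≤ ((sSup (B N y K) : ℝ) : EReal) := by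
  refine iSup₂_le fun x ⟨hx, hx1⟩ => ?_
  exact EReal.coe_le_coe_iff.mpr
    (le_csSup (bddAbove_B hN y K) ⟨x, hx, le_of_eq hx1, rfl⟩)

lemma suppFn_eq_coe_sSup_B (hN : IsNorm N) (y : Fin d → ℝ) {K : Finset (Fin d)}
    (hK : K.Nonempty) :
    suppFn (RK K ∩ {x | N x = 1}) y = ((sSup (B N y K) : ℝ) : EReal) := by
  obtain ⟨x0, hx0, hx01⟩ := exists_sphere_pt hN hK
  have h := suppFn_eq_coe_sSup (RK K ∩ {x | N x = 1}) y
    ⟨dotp x0 y, x0, ⟨hx0, hx01⟩, rfl⟩ (bddAbove_Sph hN y K)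
  rw [h, sSup_B_eq_sSup_Sph hN y hK]
  rfl


theorem part1 (hN : IsNorm N) (k : ℕ) (hk1 : 1 ≤ k) (hkd : k ≤ d) (y : Fin d → ℝ) :
    ((dualCoord N k y : ℝ) : EReal)
      = ⨆ (K : Finset (Fin d)) (_ : K.card ≤ k), suppFn (RK K ∩ {x | N x = 1}) y := by
  have hd : 0 < d := lt_of_lt_of_le hk1 hkd
  apply le_antisymm
  · obtain ⟨K0, hK0, hV⟩ := dualCoord_attained N y k
    rw [hV]
    rcases Finset.eq_empty_or_nonempty K0 with rfl | hne
    · rw [B_empty hN y, csSup_singleton]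
      set i : Fin d := ⟨0, hd⟩
      have h1 : ({i} : Finset (Fin d)).card ≤ k := by simp [hk1]
      refine le_trans ?_ (le_iSup₂_of_le {i} h1 le_rfl)
      rw [suppFn_eq_coe_sSup_B hN y ⟨i, Finset.mem_singleton_self i⟩]
      exact EReal.coe_le_coe_iff.mpr (sSup_B_nonneg hN y {i})
    · rw [← suppFn_eq_coe_sSup_B hN y hne]
      exact le_iSup₂_of_le K0 hK0 le_rfl
  · refine iSup₂_le fun K hK => ?_
    exact (suppFn_le_coe_sSup_B hN y K).trans
      (EReal.coe_le_coe_iff.mpr (le_dualCoord N y hK))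

lemma suppFn_biUnion (s : Set (Finset (Fin d))) (C : Finset (Fin d) → Set (Fin d → ℝ))
    (y : Fin d → ℝ) :
    suppFn (⋃ K ∈ s, C K) y = ⨆ K ∈ s, suppFn (C K) y := by
  apply le_antisymm
  · refine iSup₂_le fun x hx => ?_
    obtain ⟨K, hK, hxK⟩ := Set.mem_iUnion₂.mp hx
    exact le_iSup₂_of_le K hK (le_iSup₂_of_le x hxK le_rfl)
  · exact iSup₂_le fun K hK => suppFn_mono (Set.subset_biUnion_of_mem hK) y

lemma sparse_eq_union (N : (Fin d → ℝ) → ℝ) (k : ℕ) :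
    {x : Fin d → ℝ | ell0 x ≤ k} ∩ {x | N x = 1}
      = ⋃ K ∈ {K : Finset (Fin d) | K.card ≤ k}, (RK K ∩ {x | N x = 1}) := by
  ext x
  simp only [Set.mem_inter_iff, Set.mem_iUnion, Set.mem_setOf_eq, exists_prop]
  constructor
  · rintro ⟨h0, h1⟩
    refine ⟨(Set.toFinite (Function.support x)).toFinset, ?_, ?_, h1⟩
    · rw [← Set.ncard_eq_toFinset_card (Function.support x) (Set.toFinite _)]
      exact h0
    · exact mem_RK_iff_support.mpr (by rw [Set.Finite.coe_toFinset])
  · rintro ⟨K, hKcard, hxK, h1⟩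
    refine ⟨?_, h1⟩
    calc ell0 x = (Function.support x).ncard := rfl
      _ ≤ (↑K : Set (Fin d)).ncard :=
          Set.ncard_le_ncard (mem_RK_iff_support.mp hxK) (Set.toFinite _)
      _ = K.card := Set.ncard_coe_finset K
      _ ≤ k := hKcard

theorem part2 (hN : IsNorm N) (k : ℕ) (hk1 : 1 ≤ k) (hkd : k ≤ d) (y : Fin d → ℝ) :
    ((dualCoord N k y : ℝ) : EReal)
      = suppFn ({x : Fin d → ℝ | ell0 x ≤ k} ∩ {x | N x = 1}) y := by
  rw [sparse_eq_union N k, suppFn_biUnion, part1 hN k hk1 hkd y]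
  rfl

lemma suppFn_nonneg_of (y : Fin d → ℝ) (C : Set (Fin d → ℝ))
    (hsym : ∀ x ∈ C, -x ∈ C) (hne : C.Nonempty) : (0 : EReal) ≤ suppFn C y := by
  obtain ⟨x, hx⟩ := hne
  rcases le_or_gt 0 (dotp x y) with h | h
  · exact le_trans (by exact_mod_cast EReal.coe_le_coe_iff.mpr h)
      (le_iSup₂_of_le x hx le_rfl)
  · have h2 : (0:ℝ) ≤ dotp (-x) y := by rw [dotp_neg]; linarith
    exact le_trans (by exact_mod_cast EReal.coe_le_coe_iff.mpr h2)
      (le_iSup₂_of_le (-x) (hsym x hx) le_rfl)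

/-- A point with `ell0 = k` and `N = 1`. -/
lemma exists_exact_sparse_pt (hN : IsNorm N) {k : ℕ} (hk1 : 1 ≤ k) (hkd : k ≤ d) :
    ∃ x : Fin d → ℝ, ell0 x = k ∧ N x = 1 := by
  classical
  have hd : 0 < d := lt_of_lt_of_le hk1 hkd
  set w : Fin d → ℝ := fun j => if (j : ℕ) < k then 1 else 0 with hw
  have hsupp : Function.support w = ↑(Finset.map (Fin.castLEEmb hkd) Finset.univ) := by
    ext j
    simp only [Function.mem_support, hw, Finset.coe_map, Set.mem_image, Finset.mem_coe,
      Finset.mem_univ, Finset.coe_univ, Set.image_univ, Set.mem_range]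
    constructor
    · intro hj
      by_cases h : (j : ℕ) < k
      · exact ⟨⟨(j : ℕ), h⟩, by simp [Fin.castLEEmb, Fin.ext_iff]⟩
      · simp [h] at hj
    · rintro ⟨i, rfl⟩
      simp [Fin.castLEEmb, Fin.is_lt]
  have h0 : ell0 w = k := by
    rw [ell0, hsupp, Set.ncard_coe_finset, Finset.card_map, Finset.card_univ, Fintype.card_fin]
  have hwne : w ≠ 0 := by
    intro h
    have h2 : ell0 w = 0 := by rw [h]; simp [ell0, Function.support_zero]
    omega
  have hpos := N_pos hN hwne
  refine ⟨(N w)⁻¹ • w, ?_, ?_⟩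
  · rw [ell0, Function.support_const_smul_of_ne_zero _ _ (inv_ne_zero hpos.ne')]
    exact h0
  · rw [hN.smul, abs_of_pos (inv_pos.mpr hpos), inv_mul_cancel₀ hpos.ne']


open Filter in
lemma coe_dotp_le_suppFn3 (hN : IsNorm N) {k : ℕ} (hkd : k ≤ d) (y x : Fin d → ℝ)
    (h0 : ell0 x ≤ k) (h1 : N x = 1) :
    ((dotp x y : ℝ) : EReal) ≤ suppFn ({x : Fin d → ℝ | ell0 x = k} ∩ {x | N x = 1}) y := by
  classical
  set F : Finset (Fin d) := (Set.toFinite (Function.support x)).toFinset with hF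
  have hFcard : F.card ≤ k := by
    rw [← Set.ncard_eq_toFinset_card (Function.support x) (Set.toFinite _)]
    exact h0
  obtain ⟨K, hFK, hKcard⟩ := Finset.exists_superset_card_eq hFcard
    (by simpa using hkd)
  have hsuppx : Function.support x = ↑F := (Set.Finite.coe_toFinset _).symm
  set z : Fin d → ℝ := fun j => if j ∈ K \ F then 1 else 0 with hz
  have hsupp : ∀ ε : ℝ, 0 < ε → Function.support (x + ε • z) = ↑K := by
    intro ε hε
    ext j
    simp only [Function.mem_support, Pi.add_apply, Pi.smul_apply, smul_eq_mul,
      Finset.mem_coe]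
    by_cases hjF : j ∈ F
    · have hjz : z j = 0 := by simp [hz, hjF]
      have hxj : x j ≠ 0 := by
        have : j ∈ Function.support x := by rw [hsuppx]; exact_mod_cast hjF
        exact this
      constructor
      · intro _; exact hFK hjF
      · intro _; rw [hjz]; simpa using hxj
    · by_cases hjK : j ∈ K
      · have hjz : z j = 1 := by simp [hz, hjK, hjF]
        have hxj : x j = 0 := by
          by_contra hc
          exact hjF (by rw [hF, Set.Finite.mem_toFinset]; exact hc)
        rw [hjz, hxj]
        simp only [zero_add, mul_one]
        exact ⟨fun _ => hjK, fun _ => hε.ne'⟩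
      · have hjz : z j = 0 := by simp [hz, hjK]
        have hxj : x j = 0 := by
          by_contra hc
          exact hjK (hFK (by rw [hF, Set.Finite.mem_toFinset]; exact hc))
        rw [hjz, hxj]
        simp [hjK]
  have hNz := N_nonneg hN z
  set δ : ℝ := (N z + 1)⁻¹ with hδdef
  have hδ : 0 < δ := inv_pos.mpr (by linarith)
  have hNpos : ∀ ε ∈ Set.Ioo (0:ℝ) δ, 0 < N (x + ε • z) := by
    rintro ε ⟨hε0, hεδ⟩
    have ht : N x ≤ N (x + ε • z) + N (ε • z) := by
      have := hN.triangle (x + ε • z) (-(ε • z))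
      rw [add_neg_cancel_right, N_neg hN] at this
      linarith
    have hεz : N (ε • z) = ε * N z := by
      rw [hN.smul, abs_of_pos hε0]
    have hlt : ε * N z < 1 := by
      have h2 : ε * (N z + 1) < δ * (N z + 1) :=
        mul_lt_mul_of_pos_right hεδ (by linarith)
      rw [hδdef, inv_mul_cancel₀ (by linarith : N z + 1 ≠ 0)] at h2
      nlinarith
    rw [h1] at ht
    rw [hεz] at ht
    linarith
  set g : ℝ → ℝ := fun ε => (N (x + ε • z))⁻¹ * (dotp x y + ε * dotp z y) with hg
  have hkey : ∀ ε ∈ Set.Ioo (0:ℝ) δ,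
      ((g ε : ℝ) : EReal) ≤ suppFn ({x : Fin d → ℝ | ell0 x = k} ∩ {x | N x = 1}) y := by
    intro ε hε
    have hNp := hNpos ε hε
    set u : Fin d → ℝ := (N (x + ε • z))⁻¹ • (x + ε • z) with hu
    have hmem : u ∈ {x : Fin d → ℝ | ell0 x = k} ∩ {x | N x = 1} := by
      constructor
      · show ell0 u = k
        rw [ell0, hu, Function.support_const_smul_of_ne_zero _ _ (inv_ne_zero hNp.ne'),
          hsupp ε hε.1, Set.ncard_coe_finset]
        exact hKcard
      · show N u = 1
        rw [hu, hN.smul, abs_of_pos (inv_pos.mpr hNp), inv_mul_cancel₀ hNp.ne']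
    have hval : dotp u y = g ε := by
      rw [hu, dotp_smul, dotp_add, dotp_smul]
    exact hval ▸ le_iSup₂_of_le u hmem le_rfl
  have hgc : ContinuousAt g 0 := by
    have hc1 : Continuous fun ε : ℝ => x + ε • z :=
      continuous_const.add (continuous_id.smul continuous_const)
    have hc2 : Continuous fun ε : ℝ => N (x + ε • z) := (N_continuous hN).comp hc1
    have hne : N (x + (0:ℝ) • z) ≠ 0 := by
      rw [zero_smul, add_zero, h1]; norm_num
    exact (hc2.continuousAt.inv₀ hne).mul
      (continuousAt_const.add (continuousAt_id.mul continuousAt_const))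
  have hg0 : g 0 = dotp x y := by
    simp [hg, h1]
  have htend : Tendsto (fun ε => ((g ε : ℝ) : EReal)) (nhdsWithin 0 (Set.Ioi 0))
      (nhds ((dotp x y : ℝ) : EReal)) := by
    have h := (hgc.continuousWithinAt (s := Set.Ioi 0)).tendsto
    rw [hg0] at h
    exact (continuous_coe_real_ereal.continuousAt.tendsto).comp h
  exact le_of_tendsto htend
    (eventually_of_mem (Ioo_mem_nhdsGT_of_mem ⟨le_rfl, hδ⟩) hkey)

theorem part3 (hN : IsNorm N) (k : ℕ) (hk1 : 1 ≤ k) (hkd : k ≤ d) (y : Fin d → ℝ) :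
    ((dualCoord N k y : ℝ) : EReal)
      = suppFn ({x : Fin d → ℝ | ell0 x = k} ∩ {x | N x = 1}) y := by
  apply le_antisymm
  · obtain ⟨K0, hK0, hV⟩ := dualCoord_attained N y k
    rw [hV]
    rcases Finset.eq_empty_or_nonempty K0 with rfl | hne
    · rw [B_empty hN y, csSup_singleton]
      refine le_trans (le_of_eq (by norm_num)) (suppFn_nonneg_of y _ ?_ ?_)
      · rintro x ⟨hx0, hx1⟩
        refine ⟨?_, ?_⟩
        · show ell0 (-x) = k
          have hss : Function.support (-x) = Function.support x := by
            ext j; simp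
          rw [ell0, hss]
          exact hx0
        · show N (-x) = 1
          rw [N_neg hN]; exact hx1
      · obtain ⟨x, hx0, hx1⟩ := exists_exact_sparse_pt hN hk1 hkd
        exact ⟨x, hx0, hx1⟩
    · rw [sSup_B_eq_sSup_Sph hN y hne]
      have hSne : (Sph N y K0).Nonempty := by
        obtain ⟨x0, hx0, hx01⟩ := exists_sphere_pt hN hne
        exact ⟨dotp x0 y, x0, ⟨hx0, hx01⟩, rfl⟩
      rw [coe_sSup_eq _ hSne (bddAbove_Sph hN y K0)]
      refine iSup₂_le fun r hr => ?_
      obtain ⟨xx, ⟨hxx, hxx1⟩, rfl⟩ := hr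
      refine coe_dotp_le_suppFn3 hN hkd y xx ?_ hxx1
      calc ell0 xx ≤ (↑K0 : Set (Fin d)).ncard :=
            Set.ncard_le_ncard (mem_RK_iff_support.mp hxx) (Set.toFinite _)
        _ = K0.card := Set.ncard_coe_finset K0
        _ ≤ k := hK0
  · have hsub : {x : Fin d → ℝ | ell0 x = k} ∩ {x | N x = 1}
        ⊆ {x : Fin d → ℝ | ell0 x ≤ k} ∩ {x | N x = 1} := by
      rintro x ⟨hx0, hx1⟩
      exact ⟨le_of_eq hx0, hx1⟩
    rw [part2 hN k hk1 hkd y]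
    exact suppFn_mono hsub y

end Main


theorem statement0 {d : ℕ} (N : (Fin d → ℝ) → ℝ) (hN : IsNorm N)
    (k : ℕ) (hk1 : 1 ≤ k) (hkd : k ≤ d) (y : Fin d → ℝ) :
    ((dualCoord N k y : ℝ) : EReal)
        = (⨆ (K : Finset (Fin d)) (_ : K.card ≤ k), suppFn (RK K ∩ {x | N x = 1}) y) ∧
      ((dualCoord N k y : ℝ) : EReal)
        = suppFn ({x : Fin d → ℝ | ell0 x ≤ k} ∩ {x | N x = 1}) y ∧
      ((dualCoord N k y : ℝ) : EReal)
        = suppFn ({x : Fin d → ℝ | ell0 x = k} ∩ {x | N x = 1}) y := by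
  exact ⟨Main.part1 hN k hk1 hkd y, Main.part2 hN k hk1 hkd y, Main.part3 hN k hk1 hkd y⟩
end
end

section
/- For every norm ⦀·⦀ on ℝ^d and every k ∈ {1,…,d}, the unit ball B_k of the coordinate-k norm equals the closed convex hull of the union over all subsets K ⊆ {1,…,d} with |K| ≤ k of the sets R_K ∩ S: B_k = cl conv( ⋃_{|K| ≤ k} (R_K ∩ S) ). -/
open scoped BigOperators

noncomputable section

namespace Aux
variable {d : ℕ} {N : (Fin d → ℝ) → ℝ}

lemma N_upper (hN : IsNorm N) : ∃ C > 0, ∀ x, N x ≤ C * ‖x‖ := by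
  classical
  have hnn : (0:ℝ) ≤ ∑ i, N (fun j => if i = j then (1:ℝ) else 0) :=
    Finset.sum_nonneg fun i _ => N_nonneg hN _
  refine ⟨(∑ i, N (fun j => if i = j then (1:ℝ) else 0)) + 1, by linarith, fun x => ?_⟩
  calc N x = N (∑ i, (x i) • fun j => if i = j then (1:ℝ) else 0) := by
        rw [← pi_eq_sum_univ]
  _ ≤ ∑ i, N ((x i) • fun j => if i = j then (1:ℝ) else 0) := N_sum_le hN _ _
  _ = ∑ i, |x i| * N (fun j => if i = j then (1:ℝ) else 0) := by
        refine Finset.sum_congr rfl fun i _ => hN.smul _ _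
  _ ≤ ∑ i, ‖x‖ * N (fun j => if i = j then (1:ℝ) else 0) := by
        refine Finset.sum_le_sum fun i _ => ?_
        exact mul_le_mul_of_nonneg_right (by simpa using norm_le_pi_norm x i) (N_nonneg hN _)
  _ = (∑ i, N (fun j => if i = j then (1:ℝ) else 0)) * ‖x‖ := by
        rw [← Finset.mul_sum]; ring
  _ ≤ ((∑ i, N (fun j => if i = j then (1:ℝ) else 0)) + 1) * ‖x‖ := by
        have := norm_nonneg x; nlinarith

lemma N_lower (hN : IsNorm N) (hd : 0 < d) : ∃ c > 0, ∀ x, c * ‖x‖ ≤ N x := by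
  obtain ⟨C, hC, hCx⟩ := N_upper hN
  have hlip : LipschitzWith (Real.toNNReal C) N := by
    apply LipschitzWith.of_dist_le_mul
    intro x y
    rw [Real.dist_eq, Real.coe_toNNReal _ hC.le, dist_eq_norm]
    rw [abs_sub_le_iff]
    constructor
    · have h1 := hN.triangle y (x - y)
      simp only [add_sub_cancel] at h1
      linarith [hCx (x - y)]
    · have h1 := hN.triangle x (y - x)
      simp only [add_sub_cancel] at h1
      have h2 := hCx (y - x)
      have h3 : N (y - x) = N (x - y) := by
        rw [show y - x = -(x-y) by ring, N_neg hN]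
      have h4 : ‖y - x‖ = ‖x - y‖ := by rw [show y - x = -(x-y) by ring, norm_neg]
      rw [h3, h4] at h2
      linarith
  have hsne : (Metric.sphere (0 : Fin d → ℝ) 1).Nonempty := by
    refine ⟨Pi.single ⟨0, hd⟩ 1, ?_⟩
    simp [Pi.norm_single]
  obtain ⟨x0, hx0s, hx0min⟩ := (isCompact_sphere (0 : Fin d → ℝ) 1).exists_isMinOn hsne
    hlip.continuous.continuousOn
  have hx0 : ∀ y ∈ Metric.sphere (0 : Fin d → ℝ) 1, N x0 ≤ N y := fun y hy => hx0min hy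
  have hx0n : ‖x0‖ = 1 := by simpa using hx0s
  have hx0pos : 0 < N x0 := by
    rcases (N_nonneg hN x0).lt_or_eq with h | h
    · exact h
    · exfalso
      have : x0 = 0 := (hN.eq_zero_iff x0).1 h.symm
      rw [this] at hx0n; simp at hx0n
  refine ⟨N x0, hx0pos, fun x => ?_⟩
  rcases eq_or_ne x 0 with rfl | hx
  · simp [N_zero hN]
  · have hxn : (0:ℝ) < ‖x‖ := norm_pos_iff.2 hx
    have hmem : ‖x‖⁻¹ • x ∈ Metric.sphere (0 : Fin d → ℝ) 1 := by
      simp [norm_smul, abs_of_pos (inv_pos.2 hxn), inv_mul_cancel₀ hxn.ne']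
    have := hx0 _ hmem
    rw [hN.smul] at this
    rw [abs_of_pos (inv_pos.2 hxn)] at this
    calc N x0 * ‖x‖ ≤ ‖x‖⁻¹ * N x * ‖x‖ := by nlinarith
    _ = N x := by field_simp

lemma dotp_le (x y : Fin d → ℝ) : dotp x y ≤ d * ‖x‖ * ‖y‖ := by
  unfold dotp
  calc ∑ i, x i * y i ≤ ∑ i : Fin d, ‖x‖ * ‖y‖ := by
        refine Finset.sum_le_sum fun i _ => ?_
        calc x i * y i ≤ |x i * y i| := le_abs_self _
        _ = |x i| * |y i| := abs_mul _ _
        _ ≤ ‖x‖ * ‖y‖ := by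
            have h1 : |x i| ≤ ‖x‖ := by simpa using norm_le_pi_norm x i
            have h2 : |y i| ≤ ‖y‖ := by simpa using norm_le_pi_norm y i
            exact mul_le_mul h1 h2 (abs_nonneg _) (norm_nonneg _)
  _ = d * ‖x‖ * ‖y‖ := by simp [Finset.sum_const, Finset.card_univ]; ring


lemma dotp_proj {K : Finset (Fin d)} {x : Fin d → ℝ} (hx : x ∈ RK K) (y : Fin d → ℝ) :
    dotp x y = dotp x (projK K y) := by
  unfold dotp projK
  refine Finset.sum_congr rfl fun i _ => ?_
  by_cases hi : i ∈ K
  · simp [hi]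
  · simp [hi, hx i hi]

lemma dotp_smul_right (a : ℝ) (x y : Fin d → ℝ) : dotp x (a • y) = a * dotp x y := by
  unfold dotp
  rw [Finset.mul_sum]
  exact Finset.sum_congr rfl fun i _ => by simp [Pi.smul_apply]; ring

lemma norm_projK_le (K : Finset (Fin d)) (y : Fin d → ℝ) : ‖projK K y‖ ≤ ‖y‖ := by
  refine (pi_norm_le_iff_of_nonneg (norm_nonneg y)).2 fun i => ?_
  unfold projK
  by_cases hi : i ∈ K
  · simpa [hi] using norm_le_pi_norm y i
  · simp [hi, norm_nonneg]

section Bounds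
variable (hN : IsNorm N) {c : ℝ} (hc : 0 < c) (hcN : ∀ x, c * ‖x‖ ≤ N x)
set_option linter.unusedSectionVars false
include hN

lemma restStar_set_ne (K : Finset (Fin d)) (y : Fin d → ℝ) :
    {r | ∃ x ∈ RK K, N x ≤ 1 ∧ r = dotp x y}.Nonempty :=
  ⟨0, 0, fun j _ => rfl, by simp [N_zero hN, dotp]⟩

include hc hcN in
lemma restStar_set_le (K : Finset (Fin d)) (y : Fin d → ℝ) :
    ∀ r ∈ {r | ∃ x ∈ RK K, N x ≤ 1 ∧ r = dotp x y}, r ≤ (d / c) * ‖y‖ := by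
  rintro r ⟨x, hx, hx1, rfl⟩
  have hxn : ‖x‖ ≤ 1 / c := by
    have h := hcN x
    rw [le_div_iff₀ hc]; nlinarith
  have h1 := dotp_le x y
  have hd0 : (0:ℝ) ≤ d := Nat.cast_nonneg d
  rw [div_eq_mul_one_div]
  have h2 : (d:ℝ) * ‖x‖ * ‖y‖ ≤ (d:ℝ) * (1 / c) * ‖y‖ :=
    mul_le_mul_of_nonneg_right (mul_le_mul_of_nonneg_left hxn hd0) (norm_nonneg y)
  linarith

include hc hcN in
lemma restStar_le (K : Finset (Fin d)) (y : Fin d → ℝ) :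
    restStar N K y ≤ (d / c) * ‖y‖ :=
  csSup_le (restStar_set_ne hN K y) (restStar_set_le hN hc hcN K y)

include hc hcN in
lemma restStar_bdd (K : Finset (Fin d)) (y : Fin d → ℝ) :
    BddAbove {r | ∃ x ∈ RK K, N x ≤ 1 ∧ r = dotp x y} :=
  ⟨(d / c) * ‖y‖, restStar_set_le hN hc hcN K y⟩

include hc hcN in
lemma le_restStar (K : Finset (Fin d)) (y : Fin d → ℝ) {x : Fin d → ℝ}
    (hx : x ∈ RK K) (hx1 : N x ≤ 1) : dotp x y ≤ restStar N K y :=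
  le_csSup (restStar_bdd hN hc hcN K y) ⟨x, hx, hx1, rfl⟩

include hc hcN in
lemma restStar_nonneg (K : Finset (Fin d)) (y : Fin d → ℝ) : 0 ≤ restStar N K y := by
  have := le_restStar hN hc hcN K y (x := 0) (fun j _ => rfl) (by simp [N_zero hN])
  simpa [dotp] using this

omit hN in
lemma dualCoord_set_ne (k : ℕ) (y : Fin d → ℝ) :
    {r | ∃ K : Finset (Fin d), K.card ≤ k ∧ r = restStar N K (projK K y)}.Nonempty :=
  ⟨restStar N ∅ (projK ∅ y), ∅, by simp, rfl⟩

include hc hcN in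
lemma dualCoord_set_le (k : ℕ) (y : Fin d → ℝ) :
    ∀ r ∈ {r | ∃ K : Finset (Fin d), K.card ≤ k ∧ r = restStar N K (projK K y)},
      r ≤ (d / c) * ‖y‖ := by
  rintro r ⟨K, hK, rfl⟩
  calc restStar N K (projK K y) ≤ (d / c) * ‖projK K y‖ := restStar_le hN hc hcN _ _
  _ ≤ (d / c) * ‖y‖ := by
      have : (0:ℝ) ≤ d / c := by positivity
      exact mul_le_mul_of_nonneg_left (norm_projK_le K y) this

include hc hcN in
lemma dualCoord_le (k : ℕ) (y : Fin d → ℝ) : dualCoord N k y ≤ (d / c) * ‖y‖ :=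
  csSup_le (dualCoord_set_ne k y) (dualCoord_set_le hN hc hcN k y)

include hc hcN in
lemma dualCoord_bdd (k : ℕ) (y : Fin d → ℝ) :
    BddAbove {r | ∃ K : Finset (Fin d), K.card ≤ k ∧ r = restStar N K (projK K y)} :=
  ⟨(d / c) * ‖y‖, dualCoord_set_le hN hc hcN k y⟩

include hc hcN in
lemma le_dualCoord {k : ℕ} {K : Finset (Fin d)} (hK : K.card ≤ k) (y : Fin d → ℝ) :
    restStar N K (projK K y) ≤ dualCoord N k y :=
  le_csSup (dualCoord_bdd hN hc hcN k y) ⟨K, hK, rfl⟩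

include hc hcN in
lemma dualCoord_zero_le (k : ℕ) : dualCoord N k 0 ≤ 1 := by
  have := dualCoord_le hN hc hcN k 0
  simpa using this.trans (by norm_num)


include hc hcN in
lemma dual_ball_bdd {C : ℝ} (hC : 0 < C) (hCN : ∀ x, N x ≤ C * ‖x‖) {k : ℕ} (hk1 : 1 ≤ k)
    {y : Fin d → ℝ} (hy : dualCoord N k y ≤ 1) : ‖y‖ ≤ C := by
  refine (pi_norm_le_iff_of_nonneg hC.le).2 fun i => ?_
  classical
  set e : Fin d → ℝ := Pi.single i 1 with he
  have hen : ‖e‖ = 1 := by simp [he, Pi.norm_single]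
  have hNe : 0 < N e := lt_of_lt_of_le (by simpa [hen] using hc) (by simpa [hen] using hcN e)
  set s : ℝ := if 0 ≤ y i then (N e)⁻¹ else -(N e)⁻¹ with hsdef
  have hs : |s| = (N e)⁻¹ := by
    rw [hsdef]; split_ifs <;> simp [abs_of_pos (inv_pos.2 hNe)]
  have hx' : (s • e) ∈ RK {i} := by
    intro j hj
    have hji : j ≠ i := by simpa using hj
    simp [Pi.smul_apply, he, Pi.single_eq_of_ne hji]
  have hN1 : N (s • e) ≤ 1 := by
    rw [hN.smul, hs, inv_mul_cancel₀ hNe.ne']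
  have hdot : dotp (s • e) (projK ({i} : Finset (Fin d)) y) = (N e)⁻¹ * |y i| := by
    unfold dotp projK
    rw [Finset.sum_eq_single i]
    · simp only [Pi.smul_apply, he, Pi.single_eq_same, smul_eq_mul, mul_one,
        Finset.mem_singleton, if_pos rfl]
      rw [hsdef]
      split_ifs with h
      · rw [abs_of_nonneg h]
      · rw [abs_of_neg (lt_of_not_ge h)]; ring
    · intro b _ hbi
      simp [Pi.smul_apply, he, Pi.single_eq_of_ne hbi]
    · simp
  have h1 : (N e)⁻¹ * |y i| ≤ restStar N {i} (projK {i} y) := by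
    rw [← hdot]; exact le_restStar hN hc hcN _ _ hx' hN1
  have h2 := le_dualCoord hN hc hcN (k := k) (K := {i}) (by simpa using hk1) y
  have h3 : (N e)⁻¹ * |y i| ≤ 1 := le_trans h1 (h2.trans hy)
  have h4 := mul_le_mul_of_nonneg_left h3 hNe.le
  rw [← mul_assoc, mul_inv_cancel₀ hNe.ne', one_mul, mul_one] at h4
  have hNeC : N e ≤ C := by simpa [hen] using hCN e
  calc ‖y i‖ = |y i| := rfl
  _ ≤ N e := h4
  _ ≤ C := hNeC

include hc hcN in
lemma coordNorm_set_ne (k : ℕ) (x : Fin d → ℝ) :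
    {r | ∃ y, dualCoord N k y ≤ 1 ∧ r = dotp x y}.Nonempty :=
  ⟨0, 0, dualCoord_zero_le hN hc hcN k, by simp [dotp]⟩

include hc hcN in
lemma coordNorm_set_le {C : ℝ} (hC : 0 < C) (hCN : ∀ x, N x ≤ C * ‖x‖) {k : ℕ} (hk1 : 1 ≤ k)
    (x : Fin d → ℝ) :
    ∀ r ∈ {r | ∃ y, dualCoord N k y ≤ 1 ∧ r = dotp x y}, r ≤ (d * ‖x‖) * C := by
  rintro r ⟨y, hy, rfl⟩
  have hyC : ‖y‖ ≤ C := dual_ball_bdd hN hc hcN hC hCN hk1 hy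
  calc dotp x y ≤ d * ‖x‖ * ‖y‖ := dotp_le x y
  _ ≤ (d * ‖x‖) * C := mul_le_mul_of_nonneg_left hyC (by positivity)

include hc hcN in
lemma coordNorm_bdd {C : ℝ} (hC : 0 < C) (hCN : ∀ x, N x ≤ C * ‖x‖) {k : ℕ} (hk1 : 1 ≤ k)
    (x : Fin d → ℝ) :
    BddAbove {r | ∃ y, dualCoord N k y ≤ 1 ∧ r = dotp x y} :=
  ⟨(d * ‖x‖) * C, coordNorm_set_le hN hc hcN hC hCN hk1 x⟩

include hc hcN in
lemma le_coordNorm {C : ℝ} (hC : 0 < C) (hCN : ∀ x, N x ≤ C * ‖x‖) {k : ℕ} (hk1 : 1 ≤ k)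
    (x : Fin d → ℝ) {y : Fin d → ℝ} (hy : dualCoord N k y ≤ 1) :
    dotp x y ≤ coordNorm N k x :=
  le_csSup (coordNorm_bdd hN hc hcN hC hCN hk1 x) ⟨y, hy, rfl⟩

include hc hcN in
lemma coordNorm_le_one_iff {C : ℝ} (hC : 0 < C) (hCN : ∀ x, N x ≤ C * ‖x‖) {k : ℕ} (hk1 : 1 ≤ k)
    (x : Fin d → ℝ) :
    coordNorm N k x ≤ 1 ↔ ∀ y, dualCoord N k y ≤ 1 → dotp x y ≤ 1 := by
  constructor
  · intro h y hy
    exact (le_coordNorm hN hc hcN hC hCN hk1 x hy).trans h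
  · intro h
    exact csSup_le (coordNorm_set_ne hN hc hcN k x) (by rintro r ⟨y, hy, rfl⟩; exact h y hy)

end Bounds
end Aux


open Aux

theorem statement4 {d : ℕ} (N : (Fin d → ℝ) → ℝ) (hN : IsNorm N)
    (k : ℕ) (hk1 : 1 ≤ k) (hkd : k ≤ d) :
    {x : Fin d → ℝ | coordNorm N k x ≤ 1}
      = closure (convexHull ℝ
          (⋃ (K : Finset (Fin d)) (_ : K.card ≤ k), (RK K ∩ {x | N x = 1}))) := by
  classical
  obtain ⟨C, hC, hCN⟩ := N_upper hN
  have hd : 0 < d := lt_of_lt_of_le hk1 hkd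
  obtain ⟨c, hc, hcN⟩ := N_lower hN hd
  set D : Set (Fin d → ℝ) :=
    ⋃ (K : Finset (Fin d)) (_ : K.card ≤ k), (RK K ∩ {x | N x = 1}) with hD
  set B : Set (Fin d → ℝ) := {x | coordNorm N k x ≤ 1} with hB
  have hcont : ∀ y : Fin d → ℝ, Continuous fun x : Fin d → ℝ => dotp x y := by
    intro y
    unfold dotp
    exact continuous_finset_sum _ fun i _ => (continuous_apply i).mul continuous_const
  have hlin : ∀ y : Fin d → ℝ, IsLinearMap ℝ fun x : Fin d → ℝ => dotp x y := by
    intro y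
    constructor
    · intro a b; unfold dotp; rw [← Finset.sum_add_distrib]
      exact Finset.sum_congr rfl fun i _ => by simp [add_mul]
    · intro m a; unfold dotp; rw [Finset.smul_sum]
      exact Finset.sum_congr rfl fun i _ => by simp; ring
  have hBT : B = ⋂ y ∈ {y | dualCoord N k y ≤ 1}, {x : Fin d → ℝ | dotp x y ≤ 1} := by
    ext x
    rw [Set.mem_iInter₂]
    exact coordNorm_le_one_iff hN hc hcN hC hCN hk1 x
  have hBclosed : IsClosed B := by
    rw [hBT]
    exact isClosed_biInter fun y _ => isClosed_le (hcont y) continuous_const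
  have hBconvex : Convex ℝ B := by
    rw [hBT]
    exact convex_iInter₂ fun y _ => convex_halfSpace_le (hlin y) 1
  have hDB : D ⊆ B := by
    rintro v hv
    obtain ⟨K, hK, hvR, hvS⟩ := by
      simpa only [hD, Set.mem_iUnion, Set.mem_inter_iff, Set.mem_setOf_eq] using hv
    rw [hB, Set.mem_setOf_eq, coordNorm_le_one_iff hN hc hcN hC hCN hk1 v]
    intro y hy
    calc dotp v y = dotp v (projK K y) := dotp_proj hvR y
    _ ≤ restStar N K (projK K y) := le_restStar hN hc hcN K _ hvR hvS.le
    _ ≤ dualCoord N k y := le_dualCoord hN hc hcN hK y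
    _ ≤ 1 := hy
  refine subset_antisymm ?_ (closure_minimal (convexHull_min hDB hBconvex) hBclosed)
  intro x hx
  by_contra hxC
  obtain ⟨f, u, hfu, hux⟩ :=
    geometric_hahn_banach_closed_point ((convex_convexHull ℝ D).closure) isClosed_closure hxC
  -- 0 is in the closed convex hull
  set i0 : Fin d := ⟨0, hd⟩
  set e : Fin d → ℝ := Pi.single i0 1 with he
  have hen : ‖e‖ = 1 := by simp [he, Pi.norm_single]
  have hNe : 0 < N e := lt_of_lt_of_le (by simpa [hen] using hc) (by simpa [hen] using hcN e)
  set v : Fin d → ℝ := (N e)⁻¹ • e with hv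
  have hvD : v ∈ D := by
    rw [hD]
    refine Set.mem_iUnion₂.2 ⟨{i0}, by simpa using hk1, ?_, ?_⟩
    · intro j hj
      have hji : j ≠ i0 := by simpa using hj
      simp [hv, he, Pi.single_eq_of_ne hji]
    · show N v = 1
      rw [hv, hN.smul, abs_of_pos (inv_pos.2 hNe), inv_mul_cancel₀ hNe.ne']
  have hvnD : -v ∈ D := by
    rw [hD]
    refine Set.mem_iUnion₂.2 ⟨{i0}, by simpa using hk1, ?_, ?_⟩
    · intro j hj
      have hji : j ≠ i0 := by simpa using hj
      simp [hv, he, Pi.single_eq_of_ne hji]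
    · show N (-v) = 1
      rw [N_neg hN, hv, hN.smul, abs_of_pos (inv_pos.2 hNe), inv_mul_cancel₀ hNe.ne']
  have h0 : (0 : Fin d → ℝ) ∈ closure (convexHull ℝ D) := by
    apply subset_closure
    have := (convex_convexHull ℝ D) (subset_convexHull ℝ D hvD) (subset_convexHull ℝ D hvnD)
      (by norm_num : (0:ℝ) ≤ 1/2) (by norm_num : (0:ℝ) ≤ 1/2) (by norm_num)
    simpa [smul_neg] using this
  have hu0 : 0 < u := by
    have := hfu 0 h0
    simpa using this
  -- linear functional representation
  set w : Fin d → ℝ := fun i => f (Pi.single i 1) with hw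
  have hg : ∀ i : Fin d, (fun j => if i = j then (1:ℝ) else 0) = Pi.single i 1 := by
    intro i; ext j; simp [Pi.single_apply, eq_comm]
  have hfw : ∀ z : Fin d → ℝ, f z = dotp z w := by
    intro z
    calc f z = f (∑ i, z i • fun j => if i = j then (1:ℝ) else 0) := by
          rw [← pi_eq_sum_univ]
    _ = ∑ i, z i * w i := by
          rw [map_sum]
          refine Finset.sum_congr rfl fun i _ => ?_
          rw [hg i, map_smul, smul_eq_mul, hw]
    _ = dotp z w := rfl
  set ytil : Fin d → ℝ := u⁻¹ • w with hytil
  have hy1 : dualCoord N k ytil ≤ 1 := by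
    refine csSup_le (dualCoord_set_ne k ytil) ?_
    rintro r ⟨K, hK, rfl⟩
    refine csSup_le (restStar_set_ne hN K _) ?_
    rintro r ⟨x', hx'R, hx'1, rfl⟩
    rw [← dotp_proj hx'R, hytil, dotp_smul_right, ← hfw]
    have hfx' : f x' ≤ u := by
      rcases eq_or_ne x' 0 with rfl | hne
      · simpa using hu0.le
      · have hlpos : 0 < N x' := by
          rcases (N_nonneg hN x').lt_or_eq with h | h
          · exact h
          · exact absurd ((hN.eq_zero_iff x').1 h.symm) hne
        set u' : Fin d → ℝ := (N x')⁻¹ • x' with hu'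
        have hu'D : u' ∈ D := by
          rw [hD]
          refine Set.mem_iUnion₂.2 ⟨K, hK, ?_, ?_⟩
          · intro j hj; simp [hu', hx'R j hj]
          · show N u' = 1
            rw [hu', hN.smul, abs_of_pos (inv_pos.2 hlpos), inv_mul_cancel₀ hlpos.ne']
        have hfu' : f u' < u := hfu u' (subset_closure (subset_convexHull ℝ D hu'D))
        have hx'eq : x' = (N x') • u' := by
          rw [hu', smul_smul, mul_inv_cancel₀ hlpos.ne', one_smul]
        have hfx'eq : f x' = N x' * f u' := by
          conv_lhs => rw [hx'eq]
          rw [map_smul, smul_eq_mul]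
        rcases le_or_gt (f u') 0 with h | h
        · have : f x' ≤ 0 := by rw [hfx'eq]; exact mul_nonpos_of_nonneg_of_nonpos hlpos.le h
          linarith
        · rw [hfx'eq]; nlinarith
    calc u⁻¹ * f x' ≤ u⁻¹ * u := mul_le_mul_of_nonneg_left hfx' (inv_pos.2 hu0).le
    _ = 1 := inv_mul_cancel₀ hu0.ne'
  have hle := le_coordNorm hN hc hcN hC hCN hk1 x hy1
  have hgt : 1 < dotp x ytil := by
    rw [hytil, dotp_smul_right, ← hfw]
    have := mul_lt_mul_of_pos_left hux (inv_pos.2 hu0)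
    rwa [inv_mul_cancel₀ hu0.ne'] at this
  have hxB : coordNorm N k x ≤ 1 := hx
  linarith
end
end

section
/- For every norm ⦀·⦀ on ℝ^d, the sequence of coordinate-k norms is decreasingly graded with respect to the ℓ0 pseudonorm: it is nonincreasing in k, and for every l ∈ {1,…,d} and every x ∈ ℝ^d, if ℓ0(x) ≤ l then ⦀x⦀_l = ⦀x⦀. -/
/-!
A vector `x` supported on a set `K` with `|K| ≤ l` pairs with any `y` as
`⟨x, y⟩ = ⟨x, y_K⟩ ≤ N x · ⦀y_K⦀_{K,★} ≤ N x · ⦀y⦀_{l,★}`, so `⦀x⦀_l ≤ N x`.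
Conversely, Hahn–Banach gives a `y` with `⟨x, y⟩ = N x` and `⟨u, y⟩ ≤ N u` for all `u`;
such a `y` has `⦀y⦀_{l,★} ≤ 1`, whence `N x ≤ ⦀x⦀_l`. Monotonicity in `k` holds because
the dual coordinate-`k` norms increase with `k`. The suprema involved are finite thanks to
the equivalence of norms in finite dimension.
-/

open scoped BigOperators

noncomputable section

variable {d : ℕ} {N : (Fin d → ℝ) → ℝ}

lemma dotp_eq_dotProduct (x y : Fin d → ℝ) : dotp x y = x ⬝ᵥ y := rfl

lemma dotp_projK_of_mem_RK {K : Finset (Fin d)} {x : Fin d → ℝ} (hx : x ∈ RK K)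
    (y : Fin d → ℝ) : dotp x (projK K y) = dotp x y := by
  refine Finset.sum_congr rfl fun j _ => ?_
  by_cases hj : j ∈ K <;> simp [projK, hj, hx j]

lemma mem_RK_filter_ne_zero (x : Fin d → ℝ) : x ∈ RK (Finset.univ.filter (x · ≠ 0)) := by
  intro j hj
  simpa using hj

lemma card_filter_ne_zero_eq_ell0 (x : Fin d → ℝ) :
    (Finset.univ.filter (x · ≠ 0)).card = ell0 x := by
  rw [ell0, ← Set.ncard_coe_finset]
  congr 1
  ext
  simp

lemma single_mem_RK_singleton (i : Fin d) (c : ℝ) : Pi.single i c ∈ RK {i} := by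
  intro j hj
  rw [Finset.mem_singleton] at hj
  simp [hj]

namespace IsNorm

lemma map_zero (hN : IsNorm N) : N 0 = 0 := (hN.eq_zero_iff 0).2 rfl

lemma map_neg (hN : IsNorm N) (x : Fin d → ℝ) : N (-x) = N x := by
  simpa using hN.smul (-1) x

lemma nonneg (hN : IsNorm N) (x : Fin d → ℝ) : 0 ≤ N x := by
  have h := hN.triangle x (-x)
  rw [add_neg_cancel, hN.map_zero, hN.map_neg] at h
  linarith

end IsNorm

/-- `Fin d → ℝ` with the norm `N` in place of the sup norm. -/
def WithNorm (d : ℕ) (_N : (Fin d → ℝ) → ℝ) : Type := Fin d → ℝ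

instance : AddCommGroup (WithNorm d N) := inferInstanceAs (AddCommGroup (Fin d → ℝ))
instance : Module ℝ (WithNorm d N) := inferInstanceAs (Module ℝ (Fin d → ℝ))
instance : FiniteDimensional ℝ (WithNorm d N) := inferInstanceAs (FiniteDimensional ℝ (Fin d → ℝ))

namespace IsNorm

variable (hN : IsNorm N)
include hN

abbrev normedAddCommGroup : NormedAddCommGroup (WithNorm d N) :=
  AddGroupNorm.toNormedAddCommGroup
    { toFun := N
      map_zero' := hN.map_zero
      add_le' := hN.triangle
      neg' := hN.map_neg
      eq_zero_of_map_eq_zero' := fun x => (hN.eq_zero_iff x).1 }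

abbrev normedSpace :
    letI := hN.normedAddCommGroup
    NormedSpace ℝ (WithNorm d N) :=
  letI := hN.normedAddCommGroup
  ⟨fun c x => (hN.smul c x).le⟩

lemma exists_dotp_le_mul (z : Fin d → ℝ) : ∃ C, ∀ u, dotp u z ≤ C * N u := by
  let := hN.normedAddCommGroup
  let := hN.normedSpace
  let φ : WithNorm d N →ₗ[ℝ] ℝ := (dotProductBilin ℝ ℝ).flip z
  let φc := LinearMap.toContinuousLinearMap φ
  exact ⟨‖φc‖, fun u => (le_abs_self _).trans (φc.le_opNorm (show WithNorm d N from u))⟩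

lemma exists_dotp_eq_and_dotp_le (x : Fin d → ℝ) :
    ∃ y, dotp x y = N x ∧ ∀ u, dotp u y ≤ N u := by
  let := hN.normedAddCommGroup
  let := hN.normedSpace
  obtain ⟨g, hg, hgx⟩ := exists_dual_vector'' ℝ (show WithNorm d N from x)
  let y : Fin d → ℝ := fun i => g (fun j => if i = j then 1 else 0)
  have dotp_y (u : Fin d → ℝ) : dotp u y = g u :=
    (LinearMap.pi_apply_eq_sum_univ (g : WithNorm d N →ₗ[ℝ] ℝ) u).symm
  refine ⟨y, by rw [dotp_y]; exact hgx, fun u => ?_⟩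
  rw [dotp_y]
  calc g u ≤ ‖g u‖ := le_abs_self _
    _ ≤ ‖g‖ * ‖(show WithNorm d N from u)‖ := g.le_opNorm _
    _ ≤ 1 * N u := mul_le_mul_of_nonneg_right hg (hN.nonneg u)
    _ = N u := one_mul _

end IsNorm

section restStar

variable (hN : IsNorm N)
include hN

lemma zero_mem_restStar_set (K : Finset (Fin d)) (z : Fin d → ℝ) :
    (0 : ℝ) ∈ {r | ∃ x ∈ RK K, N x ≤ 1 ∧ r = dotp x z} :=
  ⟨0, fun _ _ => rfl, by simp [hN.map_zero], by simp [dotp]⟩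

lemma bddAbove_restStar_set (K : Finset (Fin d)) (z : Fin d → ℝ) :
    BddAbove {r | ∃ x ∈ RK K, N x ≤ 1 ∧ r = dotp x z} := by
  obtain ⟨C, hC⟩ := hN.exists_dotp_le_mul z
  refine ⟨max C 0, ?_⟩
  rintro _ ⟨x, -, hx, rfl⟩
  calc dotp x z ≤ C * N x := hC x
    _ ≤ max C 0 * N x := mul_le_mul_of_nonneg_right (le_max_left _ _) (hN.nonneg x)
    _ ≤ max C 0 := mul_le_of_le_one_right (le_max_right _ _) hx

lemma dotp_le_mul_restStar {K : Finset (Fin d)} {x : Fin d → ℝ} (hx : x ∈ RK K)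
    (z : Fin d → ℝ) : dotp x z ≤ N x * restStar N K z := by
  rcases eq_or_ne x 0 with rfl | hx0
  · simp [dotp, hN.map_zero]
  have hNx : 0 < N x := (hN.nonneg x).lt_of_ne' fun h => hx0 ((hN.eq_zero_iff x).1 h)
  have hunit : (N x)⁻¹ • x ∈ RK K := fun j hj => by simp [hx j hj]
  have hmem : (N x)⁻¹ * dotp x z ≤ restStar N K z := by
    refine le_csSup (bddAbove_restStar_set hN K z) ⟨_, hunit, ?_, ?_⟩
    · rw [hN.smul, abs_of_pos (inv_pos.2 hNx), inv_mul_cancel₀ hNx.ne']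
    · simp [dotp_eq_dotProduct]
  rwa [inv_mul_le_iff₀ hNx] at hmem

lemma restStar_projK_le_one {y : Fin d → ℝ} (hy : ∀ u, dotp u y ≤ N u) (K : Finset (Fin d)) :
    restStar N K (projK K y) ≤ 1 := by
  refine csSup_le ⟨0, zero_mem_restStar_set hN K _⟩ ?_
  rintro _ ⟨u, hu, hNu, rfl⟩
  rw [dotp_projK_of_mem_RK hu]
  exact (hy u).trans hNu

end restStar

section dualCoord

lemma bddAbove_dualCoord_set (k : ℕ) (y : Fin d → ℝ) :
    BddAbove {r | ∃ K : Finset (Fin d), K.card ≤ k ∧ r = restStar N K (projK K y)} :=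
  ((Set.finite_range fun K : Finset (Fin d) => restStar N K (projK K y)).subset
    (by rintro _ ⟨K, -, rfl⟩; exact ⟨K, rfl⟩)).bddAbove

lemma restStar_le_dualCoord {K : Finset (Fin d)} {k : ℕ} (hK : K.card ≤ k) (y : Fin d → ℝ) :
    restStar N K (projK K y) ≤ dualCoord N k y :=
  le_csSup (bddAbove_dualCoord_set k y) ⟨K, hK, rfl⟩

lemma dualCoord_mono {k l : ℕ} (hkl : k ≤ l) (y : Fin d → ℝ) :
    dualCoord N k y ≤ dualCoord N l y :=
  csSup_le ⟨_, ∅, Nat.zero_le k, rfl⟩ fun _ ⟨_, hK, hr⟩ =>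
    hr ▸ restStar_le_dualCoord (hK.trans hkl) y

variable (hN : IsNorm N)
include hN

lemma dualCoord_le_one {y : Fin d → ℝ} (hy : ∀ u, dotp u y ≤ N u) (k : ℕ) :
    dualCoord N k y ≤ 1 :=
  csSup_le ⟨_, ∅, Nat.zero_le k, rfl⟩ fun _ ⟨K, _, hr⟩ => hr ▸ restStar_projK_le_one hN hy K

lemma dotp_le_mul_dualCoord {K : Finset (Fin d)} {l : ℕ} (hK : K.card ≤ l) {x : Fin d → ℝ}
    (hx : x ∈ RK K) (y : Fin d → ℝ) : dotp x y ≤ N x * dualCoord N l y :=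
  calc dotp x y = dotp x (projK K y) := (dotp_projK_of_mem_RK hx y).symm
    _ ≤ N x * restStar N K (projK K y) := dotp_le_mul_restStar hN hx _
    _ ≤ N x * dualCoord N l y :=
      mul_le_mul_of_nonneg_left (restStar_le_dualCoord hK y) (hN.nonneg x)

lemma dotp_le_of_dualCoord_le_one {l : ℕ} (hl : 1 ≤ l) {y : Fin d → ℝ} (hy : dualCoord N l y ≤ 1)
    (x : Fin d → ℝ) : dotp x y ≤ ∑ i, N (Pi.single i (x i)) := by
  have hsum : dotp x y = ∑ i, dotp (Pi.single i (x i)) y := by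
    simp only [dotp_eq_dotProduct]
    rw [← sum_dotProduct, Finset.univ_sum_single]
  rw [hsum]
  refine Finset.sum_le_sum fun i _ => ?_
  calc dotp (Pi.single i (x i)) y
      ≤ N (Pi.single i (x i)) * dualCoord N l y :=
        dotp_le_mul_dualCoord hN ((Finset.card_singleton i).trans_le hl)
          (single_mem_RK_singleton i (x i)) y
    _ ≤ N (Pi.single i (x i)) := mul_le_of_le_one_right (hN.nonneg _) hy

end dualCoord

section coordNorm

variable (hN : IsNorm N)
include hN

lemma zero_mem_coordNorm_set (k : ℕ) (x : Fin d → ℝ) :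
    (0 : ℝ) ∈ {r | ∃ y, dualCoord N k y ≤ 1 ∧ r = dotp x y} :=
  ⟨0, dualCoord_le_one hN (fun u => by simp [dotp, hN.nonneg u]) k, by simp [dotp]⟩

lemma bddAbove_coordNorm_set {l : ℕ} (hl : 1 ≤ l) (x : Fin d → ℝ) :
    BddAbove {r | ∃ y, dualCoord N l y ≤ 1 ∧ r = dotp x y} :=
  ⟨_, fun _ ⟨_, hy, hr⟩ => hr ▸ dotp_le_of_dualCoord_le_one hN hl hy x⟩

lemma coordNorm_anti {k l : ℕ} (hk : 1 ≤ k) (hkl : k ≤ l) (x : Fin d → ℝ) :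
    coordNorm N l x ≤ coordNorm N k x :=
  csSup_le_csSup (bddAbove_coordNorm_set hN hk x) ⟨0, zero_mem_coordNorm_set hN l x⟩
    fun _ ⟨y, hy, hr⟩ => ⟨y, (dualCoord_mono hkl y).trans hy, hr⟩

lemma coordNorm_le_of_ell0_le {l : ℕ} {x : Fin d → ℝ} (hx : ell0 x ≤ l) :
    coordNorm N l x ≤ N x := by
  refine csSup_le ⟨0, zero_mem_coordNorm_set hN l x⟩ fun _ ⟨y, hy, hr⟩ => hr ▸ ?_
  calc dotp x y ≤ N x * dualCoord N l y :=
        dotp_le_mul_dualCoord hN ((card_filter_ne_zero_eq_ell0 x).trans_le hx)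
          (mem_RK_filter_ne_zero x) y
    _ ≤ N x := mul_le_of_le_one_right (hN.nonneg x) hy

lemma le_coordNorm {l : ℕ} (hl : 1 ≤ l) (x : Fin d → ℝ) : N x ≤ coordNorm N l x := by
  obtain ⟨y, hxy, hy⟩ := hN.exists_dotp_eq_and_dotp_le x
  exact le_csSup (bddAbove_coordNorm_set hN hl x) ⟨y, dualCoord_le_one hN hy l, hxy.symm⟩

end coordNorm

theorem statement7 {d : ℕ} (N : (Fin d → ℝ) → ℝ) (hN : IsNorm N) :
    (∀ (x : Fin d → ℝ) (k l : ℕ), 1 ≤ k → k ≤ l → l ≤ d →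
        coordNorm N l x ≤ coordNorm N k x) ∧
      ∀ l : ℕ, 1 ≤ l → l ≤ d → ∀ x : Fin d → ℝ, ell0 x ≤ l → coordNorm N l x = N x :=
  ⟨fun x _ _ hk hkl _ => coordNorm_anti hN hk hkl x,
    fun _ hl _ x hx => (coordNorm_le_of_ell0_le hN hx).antisymm (le_coordNorm hN hl x)⟩
end
end
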